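/- Let β, m, L > 0 and set θ_k = β((2πk/L)² + m²) for k ∈ ℤ. For each k let ρ_k be the probability measure on ℝ² with density (θ_k/2π) exp(−θ_k |x|²/2), and let μ = ⊗_{k∈ℤ} ρ_k be the infinite product probability measure on (ℝ²)^ℤ. Then for every 0 ≤ γ < 1/2 and every ε ∈ ℝ with 2ε < (βm²)^{1−γ}, one has ∫ exp( ε Σ_{k∈ℤ} θ_k^γ |x_k|² ) dμ < ∞. -/

import Mathlib

/-!
The coordinates are independent, so on a finite set of modes the exponential moment factorizes.
Mode `k` contributes the Gaussian integral `(1 - 2εθ_k^{γ-1})⁻¹`, and since `θ_k ≥ βm²` the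
quantity `2εθ_k^{γ-1}` stays below `δ = 2ε(βm²)^{γ-1} < 1`, so this factor is at most
`exp(2εθ_k^{γ-1}/(1-δ))`. The product is therefore bounded by `exp(C Σ_k θ_k^{γ-1})`, which is
finite because `θ_k ≍ k²` and `2(1-γ) > 1`; monotone convergence over finite sets of modes
passes to the full series.
-/

open Real MeasureTheory ProbabilityTheory

noncomputable def modeMeasure (θ : ℝ) : Measure (ℝ × ℝ) :=
  volume.withDensity fun v => ENNReal.ofReal (θ / (2 * π) * Real.exp (-θ * (v.1 ^ 2 + v.2 ^ 2) / 2))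

lemma lintegral_ofReal_exp_neg_mul_sq {c : ℝ} (hc : 0 < c) :
    ∫⁻ x : ℝ, ENNReal.ofReal (exp (-c * x ^ 2)) = ENNReal.ofReal √(π / c) := by
  rw [← integral_gaussian c, ofReal_integral_eq_lintegral_ofReal (integrable_exp_neg_mul_sq hc)
    (Filter.Eventually.of_forall fun x => (exp_pos _).le)]

lemma modeMeasure_lintegral_exp {θ a : ℝ} (hθ : 0 < θ) (ha : 2 * a < θ) :
    ∫⁻ v, ENNReal.ofReal (exp (a * (v.1 ^ 2 + v.2 ^ 2))) ∂modeMeasure θ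
      = ENNReal.ofReal (1 - 2 * a / θ)⁻¹ := by
  have hc : 0 < θ / 2 - a := by linarith
  have hsplit : ∀ v : ℝ × ℝ,
      ENNReal.ofReal (θ / (2 * π) * exp (-θ * (v.1 ^ 2 + v.2 ^ 2) / 2)) *
          ENNReal.ofReal (exp (a * (v.1 ^ 2 + v.2 ^ 2)))
        = ENNReal.ofReal (θ / (2 * π)) * (ENNReal.ofReal (exp (-(θ / 2 - a) * v.1 ^ 2)) *
            ENNReal.ofReal (exp (-(θ / 2 - a) * v.2 ^ 2))) := fun v => by
    rw [← ENNReal.ofReal_mul (by positivity), ← ENNReal.ofReal_mul (by positivity),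
      ← ENNReal.ofReal_mul (by positivity), ← exp_add, mul_assoc, ← exp_add]
    ring_nf
  rw [modeMeasure, lintegral_withDensity_eq_lintegral_mul _ (by fun_prop) (by fun_prop)]
  simp only [Pi.mul_apply, hsplit]
  rw [lintegral_const_mul _ (by fun_prop), Measure.volume_eq_prod,
    lintegral_prod_mul (f := fun x => ENNReal.ofReal (exp (-(θ / 2 - a) * x ^ 2)))
      (g := fun x => ENNReal.ofReal (exp (-(θ / 2 - a) * x ^ 2))) (by fun_prop) (by fun_prop),
    lintegral_ofReal_exp_neg_mul_sq hc,
    ← ENNReal.ofReal_mul (by positivity), ← ENNReal.ofReal_mul (by positivity),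
    mul_self_sqrt (by positivity)]
  congr 1
  field_simp

lemma inv_one_sub_le_exp_div {t δ : ℝ} (ht : 0 ≤ t) (htδ : t ≤ δ) (hδ : δ < 1) :
    (1 - t)⁻¹ ≤ exp (t / (1 - δ)) := by
  have ht1 : 0 < 1 - t := by linarith
  calc (1 - t)⁻¹ = t / (1 - t) + 1 := by field_simp; ring
    _ ≤ t / (1 - δ) + 1 := by gcongr
    _ ≤ exp (t / (1 - δ)) := add_one_le_exp _

lemma modeMeasure_lintegral_exp_rpow_le {θ b γ ε : ℝ} (hb : 0 < b) (hbθ : b ≤ θ) (hγ : γ ≤ 1)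
    (hε : 0 ≤ ε) (hδ : 2 * ε * b ^ (γ - 1) < 1) :
    ∫⁻ v, ENNReal.ofReal (exp (ε * θ ^ γ * (v.1 ^ 2 + v.2 ^ 2))) ∂modeMeasure θ
      ≤ ENNReal.ofReal (exp (2 * ε / (1 - 2 * ε * b ^ (γ - 1)) * θ ^ (γ - 1))) := by
  have hθ : 0 < θ := hb.trans_le hbθ
  have hθb : θ ^ (γ - 1) ≤ b ^ (γ - 1) := rpow_le_rpow_of_nonpos hb hbθ (by linarith)
  have hratio : 2 * (ε * θ ^ γ) / θ = 2 * ε * θ ^ (γ - 1) := by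
    rw [rpow_sub_one hθ.ne']; ring
  have ht : 2 * ε * θ ^ (γ - 1) ≤ 2 * ε * b ^ (γ - 1) := by gcongr
  have ha : 2 * (ε * θ ^ γ) < θ := by
    have := (div_lt_one hθ).mp (hratio ▸ ht.trans_lt hδ); linarith
  rw [modeMeasure_lintegral_exp hθ ha, hratio]
  refine ENNReal.ofReal_le_ofReal ((inv_one_sub_le_exp_div (by positivity) ht hδ).trans_eq ?_)
  ring_nf

lemma lintegral_exp_sum_eq_prod_of_iIndepFun {Ω ι : Type*} [MeasurableSpace Ω] {μ : Measure Ω}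
    {f : ι → Ω → ℝ} (hf : ∀ i, Measurable (f i)) (hindep : iIndepFun f μ) (s : Finset ι) :
    ∫⁻ ω, ENNReal.ofReal (exp (∑ i ∈ s, f i ω)) ∂μ
      = ∏ i ∈ s, ∫⁻ ω, ENNReal.ofReal (exp (f i ω)) ∂μ := by
  simp_rw [exp_sum, ENNReal.ofReal_prod_of_nonneg fun i _ => (exp_pos (f i _)).le]
  exact lintegral_prod_eq_prod_lintegral_of_indepFun s _
    (hindep.comp (fun _ y => ENNReal.ofReal (exp y)) fun _ => by fun_prop) fun i => by fun_prop

lemma ofReal_exp_tsum_le_iSup_sum {ι : Type*} (a : ι → ℝ) :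
    ENNReal.ofReal (exp (∑' i, a i)) ≤ ⨆ s : Finset ι, ENNReal.ofReal (exp (∑ i ∈ s, a i)) := by
  by_cases ha : Summable a
  · have hcont := ENNReal.continuous_ofReal.comp continuous_exp
    exact le_of_tendsto' ((hcont.tendsto _).comp ha.hasSum) fun s => le_iSup_of_le s le_rfl
  · rw [tsum_eq_zero_of_not_summable ha]
    exact le_iSup_of_le ∅ (by simp)

lemma lintegral_exp_tsum_le {Ω ι : Type*} [MeasurableSpace Ω] [Countable ι] {μ : Measure Ω}
    {f : ι → Ω → ℝ} (hf : ∀ i, Measurable (f i)) (hf0 : ∀ i ω, 0 ≤ f i ω) {C : ENNReal}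
    (hC : ∀ s : Finset ι, ∫⁻ ω, ENNReal.ofReal (exp (∑ i ∈ s, f i ω)) ∂μ ≤ C) :
    ∫⁻ ω, ENNReal.ofReal (exp (∑' i, f i ω)) ∂μ ≤ C := by
  have hmono : Monotone fun s : Finset ι => fun ω => ENNReal.ofReal (exp (∑ i ∈ s, f i ω)) :=
    fun s t hst ω => ENNReal.ofReal_le_ofReal <| exp_le_exp.mpr <|
      Finset.sum_le_sum_of_subset_of_nonneg hst fun i _ _ => hf0 i ω
  calc ∫⁻ ω, ENNReal.ofReal (exp (∑' i, f i ω)) ∂μ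
      ≤ ∫⁻ ω, ⨆ s : Finset ι, ENNReal.ofReal (exp (∑ i ∈ s, f i ω)) ∂μ :=
        lintegral_mono fun ω => ofReal_exp_tsum_le_iSup_sum _
    _ = ⨆ s : Finset ι, ∫⁻ ω, ENNReal.ofReal (exp (∑ i ∈ s, f i ω)) ∂μ :=
        lintegral_iSup_directed (fun s => by fun_prop) hmono.directed_le
    _ ≤ C := iSup_le hC

lemma summable_int_mul_sq_add_rpow {a b p : ℝ} (ha : 0 < a) (hb : 0 ≤ b) (hp : p < -1 / 2) :
    Summable fun k : ℤ => (a * k ^ 2 + b) ^ p := by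
  refine .of_norm_bounded_eventually
    ((summable_abs_int_rpow (b := -(2 * p)) (by linarith)).mul_left (a ^ p)) ?_
  filter_upwards [(Set.finite_singleton (0 : ℤ)).compl_mem_cofinite] with k hk
  have hk : (k : ℝ) ≠ 0 := by simpa using hk
  have hpos : 0 < a * (k : ℝ) ^ 2 := by positivity
  rw [neg_neg, norm_of_nonneg (by positivity), rpow_mul (abs_nonneg _), rpow_two, sq_abs,
    ← mul_rpow ha.le (by positivity)]
  exact rpow_le_rpow_of_nonpos hpos (by linarith) (by linarith)

theorem lintegral_exp_mul_tsum_lt_top_of_nonneg {ι : Type*} [Countable ι] (θ : ι → ℝ)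
    {b γ ε : ℝ} (hb : 0 < b) (hbθ : ∀ k, b ≤ θ k) (hγ : γ ≤ 1)
    (hsum : Summable fun k => θ k ^ (γ - 1)) (μ : Measure (ι → ℝ × ℝ))
    (hindep : iIndepFun (fun k (x : ι → ℝ × ℝ) => x k) μ)
    (hmarg : ∀ k, μ.map (fun x => x k) = modeMeasure (θ k))
    (hε0 : 0 ≤ ε) (hε : 2 * ε < b ^ (1 - γ)) :
    ∫⁻ x, ENNReal.ofReal (exp (ε * ∑' k, θ k ^ γ * ((x k).1 ^ 2 + (x k).2 ^ 2))) ∂μ < ⊤ := by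
  have hδ : 2 * ε * b ^ (γ - 1) < 1 := by
    rwa [← neg_sub, rpow_neg hb.le, ← div_eq_mul_inv, div_lt_one (by positivity)]
  set K := 2 * ε / (1 - 2 * ε * b ^ (γ - 1))
  set X : ι → (ι → ℝ × ℝ) → ℝ := fun k x => ε * θ k ^ γ * ((x k).1 ^ 2 + (x k).2 ^ 2)
  have hX : ∀ k, Measurable (X k) := fun k => by fun_prop
  have hX0 : ∀ k x, 0 ≤ X k x := fun k x =>
    mul_nonneg (mul_nonneg hε0 (rpow_nonneg (hb.le.trans (hbθ k)) _)) (by positivity)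
  have hXindep : iIndepFun X μ :=
    hindep.comp (fun k (v : ℝ × ℝ) => ε * θ k ^ γ * (v.1 ^ 2 + v.2 ^ 2)) fun k => by fun_prop
  have hmode : ∀ k, ∫⁻ x, ENNReal.ofReal (exp (X k x)) ∂μ
      ≤ ENNReal.ofReal (exp (K * θ k ^ (γ - 1))) := fun k => by
    rw [← lintegral_map
      (f := fun v : ℝ × ℝ => ENNReal.ofReal (exp (ε * θ k ^ γ * (v.1 ^ 2 + v.2 ^ 2))))
      (by fun_prop) (measurable_pi_apply k), hmarg k]
    exact modeMeasure_lintegral_exp_rpow_le hb (hbθ k) hγ hε0 hδ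
  have hfinite : ∀ s : Finset ι, ∫⁻ x, ENNReal.ofReal (exp (∑ k ∈ s, X k x)) ∂μ
      ≤ ENNReal.ofReal (exp (K * ∑' k, θ k ^ (γ - 1))) := fun s => by
    rw [lintegral_exp_sum_eq_prod_of_iIndepFun hX hXindep s]
    calc ∏ k ∈ s, ∫⁻ x, ENNReal.ofReal (exp (X k x)) ∂μ
        ≤ ∏ k ∈ s, ENNReal.ofReal (exp (K * θ k ^ (γ - 1))) :=
          Finset.prod_le_prod' fun k _ => hmode k
      _ = ENNReal.ofReal (exp (K * ∑ k ∈ s, θ k ^ (γ - 1))) := by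
        rw [Finset.mul_sum, exp_sum, ENNReal.ofReal_prod_of_nonneg fun k _ => (exp_pos _).le]
      _ ≤ ENNReal.ofReal (exp (K * ∑' k, θ k ^ (γ - 1))) := by
        gcongr
        exact hsum.sum_le_tsum s fun k _ => rpow_nonneg (hb.le.trans (hbθ k)) _
  calc ∫⁻ x, ENNReal.ofReal (exp (ε * ∑' k, θ k ^ γ * ((x k).1 ^ 2 + (x k).2 ^ 2))) ∂μ
      = ∫⁻ x, ENNReal.ofReal (exp (∑' k, X k x)) ∂μ := by simp_rw [X, mul_assoc, tsum_mul_left]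
    _ ≤ ENNReal.ofReal (exp (K * ∑' k, θ k ^ (γ - 1))) := lintegral_exp_tsum_le hX hX0 hfinite
    _ < ⊤ := ENNReal.ofReal_lt_top

theorem lintegral_exp_mul_tsum_lt_top {ι : Type*} [Countable ι] (θ : ι → ℝ)
    {b γ ε : ℝ} (hb : 0 < b) (hbθ : ∀ k, b ≤ θ k) (hγ : γ ≤ 1)
    (hsum : Summable fun k => θ k ^ (γ - 1)) (μ : Measure (ι → ℝ × ℝ)) [IsProbabilityMeasure μ]
    (hindep : iIndepFun (fun k (x : ι → ℝ × ℝ) => x k) μ)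
    (hmarg : ∀ k, μ.map (fun x => x k) = modeMeasure (θ k)) (hε : 2 * ε < b ^ (1 - γ)) :
    ∫⁻ x, ENNReal.ofReal (exp (ε * ∑' k, θ k ^ γ * ((x k).1 ^ 2 + (x k).2 ^ 2))) ∂μ < ⊤ := by
  obtain hε0 | hε0 := le_or_gt ε 0
  · refine (lintegral_mono fun x => ?_).trans_lt
      (lintegral_const_lt_top (μ := μ) ENNReal.one_ne_top)
    refine ENNReal.ofReal_le_one.mpr (exp_le_one_iff.mpr (mul_nonpos_of_nonpos_of_nonneg hε0 ?_))
    exact tsum_nonneg fun k => mul_nonneg (rpow_nonneg (hb.le.trans (hbθ k)) _) (by positivity)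
  · exact lintegral_exp_mul_tsum_lt_top_of_nonneg θ hb hbθ hγ hsum μ hindep hmarg hε0.le hε

theorem exponential_integrability_fractional_sobolev_norm_general
    (β m L γ ε : ℝ) (hβ : 0 < β) (hm : 0 < m) (hL : 0 < L)
    (hγ : γ < 1 / 2) (hε : 2 * ε < (β * m ^ 2) ^ (1 - γ))
    (μ : Measure (ℤ → ℝ × ℝ)) [IsProbabilityMeasure μ]
    (hindep : iIndepFun (fun k (x : ℤ → ℝ × ℝ) => x k) μ)
    (hmarg : ∀ k : ℤ,
      μ.map (fun x => x k) = modeMeasure (β * ((2 * π * k / L) ^ 2 + m ^ 2))) :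
    ∫⁻ x : ℤ → ℝ × ℝ,
        ENNReal.ofReal (Real.exp (ε * ∑' k : ℤ,
          (β * ((2 * π * k / L) ^ 2 + m ^ 2)) ^ γ * ((x k).1 ^ 2 + (x k).2 ^ 2))) ∂μ
      < ⊤ := by
  have hθ : ∀ k : ℤ,
      β * ((2 * π * k / L) ^ 2 + m ^ 2) = β * (2 * π / L) ^ 2 * k ^ 2 + β * m ^ 2 :=
    fun k => by ring
  have hbθ : ∀ k : ℤ, β * m ^ 2 ≤ β * ((2 * π * k / L) ^ 2 + m ^ 2) := fun k => by
    rw [hθ]; exact le_add_of_nonneg_left (by positivity)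
  have hsum : Summable fun k : ℤ => (β * ((2 * π * k / L) ^ 2 + m ^ 2)) ^ (γ - 1) := by
    simp_rw [hθ]
    exact summable_int_mul_sq_add_rpow (by positivity) (by positivity) (by linarith)
  exact lintegral_exp_mul_tsum_lt_top _ (by positivity) hbθ (by linarith) hsum μ hindep hmarg hε

/-- Let `μ = ⊗_{k∈ℤ} ρ_k` be the product of the Gaussian mode measures
`ρ_k` with parameters `θ_k = β((2πk/L)² + m²)` (characterized by: the coordinates are
independent with marginal laws `ρ_k`). Then for `0 ≤ γ < 1/2` and `2ε < (βm²)^{1-γ}`,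
`∫ exp(ε Σ_k θ_k^γ |x_k|²) dμ < ∞`. -/
theorem exponential_integrability_fractional_sobolev_norm
    (β m L γ ε : ℝ) (hβ : 0 < β) (hm : 0 < m) (hL : 0 < L)
    (hγ0 : 0 ≤ γ) (hγ : γ < 1 / 2) (hε : 2 * ε < (β * m ^ 2) ^ (1 - γ))
    (μ : Measure (ℤ → ℝ × ℝ)) [IsProbabilityMeasure μ]
    (hindep : iIndepFun (fun k (x : ℤ → ℝ × ℝ) => x k) μ)
    (hmarg : ∀ k : ℤ,
      μ.map (fun x => x k) = modeMeasure (β * ((2 * π * k / L) ^ 2 + m ^ 2))) :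
    ∫⁻ x : ℤ → ℝ × ℝ,
        ENNReal.ofReal (Real.exp (ε * ∑' k : ℤ,
          (β * ((2 * π * k / L) ^ 2 + m ^ 2)) ^ γ * ((x k).1 ^ 2 + (x k).2 ^ 2))) ∂μ
      < ⊤ :=
  exponential_integrability_fractional_sobolev_norm_general β m L γ ε hβ hm hL hγ hε μ hindep hmarg
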